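/- For all integers m, n with 1 ≤ m ≤ n and n ≥ 2, the upper broadcast domination number of the grid satisfies Γ_b(P_m □ P_n) ≥ m·(n − 1). -/

import Mathlib

open SimpleGraph Finset

/-- `S` is a dominating set of `G`: every vertex is in `S` or adjacent to a vertex of `S`. -/
def Dominates {V : Type*} (G : SimpleGraph V) (S : Finset V) : Prop :=
  ∀ v : V, v ∈ S ∨ ∃ u ∈ S, G.Adj v u

/-- `S` is a minimal dominating set: it dominates and no proper subset dominates. -/
def MinimalDominating {V : Type*} (G : SimpleGraph V) (S : Finset V) : Prop :=
  Dominates G S ∧ ∀ S' : Finset V, S' ⊂ S → ¬ Dominates G S'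

/-- The upper domination number `Γ(G)`: maximum cardinality of a minimal dominating set. -/
noncomputable def upperDomination {V : Type*} (G : SimpleGraph V) : ℕ :=
  sSup {k : ℕ | ∃ S : Finset V, MinimalDominating G S ∧ S.card = k}

/-- The domination number `γ(G)`: minimum cardinality of a dominating set. -/
noncomputable def domNumber {V : Type*} (G : SimpleGraph V) : ℕ :=
  sInf {k : ℕ | ∃ S : Finset V, Dominates G S ∧ S.card = k}

/-- The eccentricity of `v` : maximum distance to any other vertex. -/
noncomputable def eccent {V : Type*} [Fintype V] (G : SimpleGraph V) (v : V) : ℕ :=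
  Finset.univ.sup (fun u => G.dist v u)

/-- The diameter of `G` : maximum eccentricity. -/
noncomputable def gDiam {V : Type*} [Fintype V] (G : SimpleGraph V) : ℕ :=
  Finset.univ.sup (fun v => _root_.eccent G v)

/-- A broadcast on `G`: `f v ≤ e(v)` for all `v`. -/
def IsBroadcast {V : Type*} [Fintype V] (G : SimpleGraph V) (f : V → ℕ) : Prop :=
  ∀ v : V, f v ≤ _root_.eccent G v

/-- A broadcast `f` dominates `G` if every vertex hears some broadcasting vertex. -/
def BroadcastDominates {V : Type*} (G : SimpleGraph V) (f : V → ℕ) : Prop :=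
  ∀ u : V, ∃ v : V, 1 ≤ f v ∧ G.dist u v ≤ f v

/-- A minimal dominating broadcast: no broadcast `g ≤ f` with `g ≠ f` dominates `G`. -/
def MinimalDominatingBroadcast {V : Type*} [Fintype V] (G : SimpleGraph V) (f : V → ℕ) : Prop :=
  IsBroadcast G f ∧ BroadcastDominates G f ∧
    ∀ g : V → ℕ, IsBroadcast G g → g ≤ f → g ≠ f → ¬ BroadcastDominates G g

/-- The cost of a broadcast. -/
def cost {V : Type*} [Fintype V] (f : V → ℕ) : ℕ := ∑ v, f v

/-- The upper broadcast domination number `Γ_b(G)`. -/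
noncomputable def upperBroadcast {V : Type*} [Fintype V] (G : SimpleGraph V) : ℕ :=
  sSup {k : ℕ | ∃ f : V → ℕ, MinimalDominatingBroadcast G f ∧ cost f = k}

/-- The broadcast domination number `γ_b(G)`. -/
noncomputable def broadcastDomNumber {V : Type*} [Fintype V] (G : SimpleGraph V) : ℕ :=
  sInf {k : ℕ | ∃ f : V → ℕ, IsBroadcast G f ∧ BroadcastDominates G f ∧ cost f = k}

/-!
Let the whole end column `{(i, 0)}` of the grid broadcast with strength `n - 1 = e(i, 0)`. Every
vertex hears the broadcaster in its own row, and `(i, n - 1)` hears only `(i, 0)`, and only at full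
strength, so no broadcast below this one dominates. Its cost is `m (n - 1)`. The argument works
for any layer `V(G) × {b}` of a box product `G □ H` of connected graphs.
-/

theorem dist_le_eccent {V : Type*} [Fintype V] (G : SimpleGraph V) (v u : V) :
    G.dist v u ≤ _root_.eccent G v :=
  Finset.le_sup (mem_univ u)

theorem exists_dist_eq_eccent {V : Type*} [Fintype V] (G : SimpleGraph V) (v : V) :
    ∃ u, G.dist v u = _root_.eccent G v := by
  obtain ⟨u, -, hu⟩ := Finset.exists_mem_eq_sup univ ⟨v, mem_univ v⟩ (G.dist v)
  exact ⟨u, hu.symm⟩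

section Broadcast

variable {V : Type*} [Fintype V] {G : SimpleGraph V} {f : V → ℕ}

theorem MinimalDominatingBroadcast.cost_le_upperBroadcast (hf : MinimalDominatingBroadcast G f) :
    cost f ≤ upperBroadcast G := by
  refine le_csSup ⟨∑ v, _root_.eccent G v, ?_⟩ ⟨f, hf, rfl⟩
  rintro k ⟨g, ⟨hg, -, -⟩, rfl⟩
  exact Finset.sum_le_sum fun v _ => hg v

/-- Lowering `f v` below its value leaves the private vertex of `v` undominated. -/
theorem MinimalDominatingBroadcast.of_exists_private (hf : IsBroadcast G f)
    (hdom : BroadcastDominates G f)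
    (hpriv : ∀ v, 1 ≤ f v → ∃ u, f v ≤ G.dist u v ∧ ∀ w ≠ v, 1 ≤ f w → f w < G.dist u w) :
    MinimalDominatingBroadcast G f := by
  refine ⟨hf, hdom, fun g _ hgf hne hgdom => ?_⟩
  obtain ⟨v, hv⟩ := Function.ne_iff.mp hne
  have hlt : g v < f v := (hgf v).lt_of_ne hv
  obtain ⟨u, huv, hu⟩ := hpriv v (by omega)
  obtain ⟨w, hgw, huw⟩ := hgdom u
  rcases eq_or_ne w v with rfl | hwv
  · exact (huv.trans huw).not_gt hlt
  · exact (hu w hwv (hgw.trans (hgf w))).not_ge (huw.trans (hgf w))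

end Broadcast

theorem dist_boxProd {α β : Type*} {G : SimpleGraph α} {H : SimpleGraph β} {x y : α × β}
    (h₁ : G.Reachable x.1 y.1) (h₂ : H.Reachable x.2 y.2) :
    (G □ H).dist x y = G.dist x.1 y.1 + H.dist x.2 y.2 := by
  have h := edist_boxProd (G := G) (H := H) x y
  rw [← (reachable_boxProd.mpr ⟨h₁, h₂⟩).coe_dist_eq_edist, ← h₁.coe_dist_eq_edist,
    ← h₂.coe_dist_eq_edist] at h
  exact_mod_cast h

theorem pathGraph_val_le_val_add_length {n : ℕ} {u v : Fin n} (p : (pathGraph n).Walk u v) :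
    (v : ℕ) ≤ u + p.length := by
  induction p with
  | nil => simp
  | cons h _ ih =>
    rw [Walk.length_cons]
    have := pathGraph_adj.mp h
    omega

theorem pathGraph_val_le_val_add_dist {n : ℕ} (u v : Fin n) :
    (v : ℕ) ≤ u + (pathGraph n).dist u v := by
  obtain ⟨p, hp⟩ := ((pathGraph_preconnected n) u v).exists_walk_length_eq_dist
  exact hp ▸ pathGraph_val_le_val_add_length p

section BoxProd

variable {α β : Type*} [Fintype α] [Fintype β] [DecidableEq β]

noncomputable def layerBroadcast (H : SimpleGraph β) (b : β) (x : α × β) : ℕ :=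
  if x.2 = b then _root_.eccent H b else 0

theorem cost_layerBroadcast (H : SimpleGraph β) (b : β) :
    cost (layerBroadcast (α := α) H b) = Fintype.card α * _root_.eccent H b := by
  simp [cost, layerBroadcast, Fintype.sum_prod_type, Finset.sum_ite_eq']

variable {G : SimpleGraph α} {H : SimpleGraph β}

/-- A vertex `(a, c)` with `c` farthest from `b` is private to `(a, b)`: the other broadcasters
`(a', b)` are farther from it by `dist a a' ≥ 1`. -/
theorem minimalDominatingBroadcast_layerBroadcast (hG : G.Preconnected) (hH : H.Preconnected)
    {b : β} (hb : 1 ≤ _root_.eccent H b) :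
    MinimalDominatingBroadcast (G □ H) (layerBroadcast H b) := by
  have hdist (x y : α × β) : (G □ H).dist x y = G.dist x.1 y.1 + H.dist x.2 y.2 :=
    dist_boxProd (hG _ _) (hH _ _)
  have hlayer {x : α × β} (hx : 1 ≤ layerBroadcast H b x) : x.2 = b := by
    by_contra h
    simp [layerBroadcast, h] at hx
  obtain ⟨c, hc⟩ := exists_dist_eq_eccent H b
  refine .of_exists_private (fun x => ?_) (fun x => ⟨(x.1, b), ?_⟩) (fun x hx => ⟨(x.1, c), ?_⟩)
  · unfold layerBroadcast
    split_ifs with hx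
    · calc _root_.eccent H b = (G □ H).dist x (x.1, c) := by simp [hdist, hx, hc]
        _ ≤ _root_.eccent (G □ H) x := dist_le_eccent _ _ _
    · exact Nat.zero_le _
  · simpa [layerBroadcast, hdist, hb, H.dist_comm] using dist_le_eccent H b x.2
  · obtain ⟨a, rfl⟩ : ∃ a, x = (a, b) := ⟨x.1, Prod.ext rfl (hlayer hx)⟩
    refine ⟨by simp [layerBroadcast, hdist, hc, H.dist_comm], fun y hyx hy => ?_⟩
    obtain ⟨a', rfl⟩ : ∃ a', y = (a', b) := ⟨y.1, Prod.ext rfl (hlayer hy)⟩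
    have hne : a ≠ a' := fun h => hyx (by rw [h])
    have := (hG a a').pos_dist_of_ne hne
    simp only [layerBroadcast, hdist, ite_true]
    rw [H.dist_comm (u := c), hc]
    omega

theorem card_mul_eccent_le_upperBroadcast_boxProd (hG : G.Preconnected) (hH : H.Preconnected)
    {b : β} (hb : 1 ≤ _root_.eccent H b) :
    Fintype.card α * _root_.eccent H b ≤ upperBroadcast (G □ H) :=
  cost_layerBroadcast (α := α) H b ▸
    (minimalDominatingBroadcast_layerBroadcast hG hH hb).cost_le_upperBroadcast

end BoxProd

theorem grid_upperBroadcast_ge_general (m n : ℕ) (hn : 2 ≤ n) :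
    m * (n - 1) ≤ upperBroadcast (pathGraph m □ pathGraph n) := by
  let first : Fin n := ⟨0, by omega⟩
  have hlast : n - 1 ≤ _root_.eccent (pathGraph n) first := by
    have := pathGraph_val_le_val_add_dist first ⟨n - 1, by omega⟩
    simp only [first, zero_add] at this
    exact this.trans (dist_le_eccent _ _ _)
  calc m * (n - 1) ≤ Fintype.card (Fin m) * _root_.eccent (pathGraph n) first := by
        rw [Fintype.card_fin]; gcongr
    _ ≤ upperBroadcast (pathGraph m □ pathGraph n) :=
        card_mul_eccent_le_upperBroadcast_boxProd (pathGraph_preconnected m)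
          (pathGraph_preconnected n) (by omega)

/-- For `1 ≤ m ≤ n` with `n ≥ 2`, `Γ_b(P_m □ P_n) ≥ m * (n - 1)`. -/
theorem grid_upperBroadcast_ge (m n : ℕ) (hm : 1 ≤ m) (hmn : m ≤ n) (hn : 2 ≤ n) :
    m * (n - 1) ≤ upperBroadcast (pathGraph m □ pathGraph n) :=
  grid_upperBroadcast_ge_general m n hn
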